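/- arXiv:2305.17879 — 5 statements merged into one kernel-verified Lean document; each statement's English description precedes it below -/
import Mathlib

section
/- Fix Δ > 0 and a bit m ∈ {0,1}. Let x ∈ Λ_m and let y = x + n with |n| < Δ/4. Then for every q ∈ Λ_{1−m} one has |y − x| < |y − q|. Consequently the minimum-distance decoder, which outputs the bit whose codebook contains a closest point to y, correctly recovers m whenever the additive noise satisfies |n| < Δ/4. -/
/-- The dither of binary QIM: `d₀ = −Δ/4`, `d₁ = Δ/4`. -/
noncomputable def qimDither (Δ : ℝ) (m : Fin 2) : ℝ :=
  if m = 0 then -(Δ / 4) else Δ / 4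

/-- The QIM codebook `Λ_m = {d_m + ℓΔ : ℓ ∈ ℤ}`. -/
def qimCodebook (Δ : ℝ) (m : Fin 2) : Set ℝ :=
  {x : ℝ | ∃ ℓ : ℤ, x = qimDither Δ m + (ℓ : ℝ) * Δ}

lemma qim_half_aux (Δ : ℝ) (hΔ : 0 < Δ) (j : ℤ) : Δ / 2 ≤ |Δ / 2 + (j : ℝ) * Δ| := by
  rcases le_or_gt 0 j with h | h
  · have hj : (0:ℝ) ≤ (j:ℝ) := by exact_mod_cast h
    have : (0:ℝ) ≤ (j:ℝ) * Δ := mul_nonneg hj hΔ.le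
    rw [abs_of_nonneg (by linarith)]; linarith
  · have hj' : j ≤ -1 := by omega
    have hj : (j:ℝ) ≤ -1 := by exact_mod_cast hj'
    have : (j:ℝ) * Δ ≤ -Δ := by nlinarith
    rw [abs_of_nonpos (by linarith)]; linarith

/-- Correctness of QIM minimum-distance decoding: if `x ∈ Λ_m` and
`y = x + n` with `|n| < Δ/4`, then `y` is strictly closer to `x` than to any
point of the opposite codebook `Λ_{1−m}`, so the decoder recovers `m`. -/
theorem qim_min_distance_decoding_correct (Δ : ℝ) (hΔ : 0 < Δ) (m : Fin 2)
    (x n : ℝ) (hx : x ∈ qimCodebook Δ m) (hn : |n| < Δ / 4) :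
    ∀ q ∈ qimCodebook Δ (1 - m), |x + n - x| < |x + n - q| := by
  rintro q ⟨k, hq⟩
  obtain ⟨ℓ, hxe⟩ := hx
  have hc : Δ / 2 ≤ |q - x| := by
    fin_cases m <;> simp [qimDither] at hxe hq
    · have : q - x = Δ / 2 + ((k - ℓ : ℤ) : ℝ) * Δ := by
        push_cast; rw [hq, hxe]; ring
      rw [this]; exact qim_half_aux Δ hΔ _
    · have : q - x = -(Δ / 2 + ((ℓ - k : ℤ) : ℝ) * Δ) := by
        push_cast; rw [hq, hxe]; ring
      rw [this, abs_neg]; exact qim_half_aux Δ hΔ _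
  have h1 : |x + n - x| = |n| := by ring_nf
  have h2 : |q - x| - |n| ≤ |x + n - q| := by
    have := abs_sub_abs_le_abs_sub (q - x) n
    have he : q - x - n = -(x + n - q) := by ring
    rw [he, abs_neg] at this; linarith
  rw [h1]; linarith
end

section
/- Fix an integer M ≥ 2, Δ > 0, a dither k ∈ ℝ and a scaling factor α with (M−1)/M < α < 1. For every s ∈ ℝ and every m ∈ {0,…,M−1}, the watermarked value s_w = α·Q_m(s) + (1−α)·s satisfies: for every grid point q ∈ G with q ≠ Q_m(s), |s_w − Q_m(s)| < |s_w − q|. Hence Q_m(s) is the unique nearest grid point to s_w, it lies in Λ_m, and the noiseless extraction of R-QIM always returns the embedded message m. -/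
/-- The R-QIM codebook `Λ_m = {mΔ/M + k + ℓΔ : ℓ ∈ ℤ}`. -/
def rqimCodebook (M : ℕ) (Δ k : ℝ) (m : ℕ) : Set ℝ :=
  {x : ℝ | ∃ ℓ : ℤ, x = (m : ℝ) * Δ / (M : ℝ) + k + (ℓ : ℝ) * Δ}

/-- The R-QIM grid `G = ⋃_{m < M} Λ_m`. -/
def rqimGrid (M : ℕ) (Δ k : ℝ) : Set ℝ :=
  ⋃ m ∈ Finset.range M, rqimCodebook M Δ k m

/-- The R-QIM (round) quantizer
`Q_m(s) = Δ·round((s − d_m − k)/Δ) + d_m + k` with `d_m = mΔ/M`. -/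
noncomputable def rqimQuant (M : ℕ) (Δ k : ℝ) (m : ℕ) (s : ℝ) : ℝ :=
  Δ * (round ((s - (m : ℝ) * Δ / (M : ℝ) - k) / Δ) : ℝ)
    + (m : ℝ) * Δ / (M : ℝ) + k

/-- Correctness of noiseless R-QIM extraction: the watermarked value
`s_w = α·Q_m(s) + (1−α)·s` is strictly closer to `Q_m(s)` than to any other
grid point; since `Q_m(s) ∈ Λ_m`, reading off the codebook of the unique
nearest grid point returns the embedded message `m`. -/
theorem rqim_noiseless_extraction_correct (M : ℕ) (hM : 2 ≤ M) (Δ : ℝ)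
    (hΔ : 0 < Δ) (k α : ℝ) (hα0 : ((M : ℝ) - 1) / (M : ℝ) < α) (hα1 : α < 1)
    (s : ℝ) (m : ℕ) (hm : m < M) :
    rqimQuant M Δ k m s ∈ rqimCodebook M Δ k m ∧
    ∀ q ∈ rqimGrid M Δ k, q ≠ rqimQuant M Δ k m s →
      |(α * rqimQuant M Δ k m s + (1 - α) * s) - rqimQuant M Δ k m s|
        < |(α * rqimQuant M Δ k m s + (1 - α) * s) - q| := by
  have hMpos : (0:ℝ) < (M:ℝ) := by
    have : 0 < M := lt_of_lt_of_le two_pos hM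
    exact_mod_cast this
  have hMne : (M:ℝ) ≠ 0 := ne_of_gt hMpos
  set d : ℝ := (m : ℝ) * Δ / (M : ℝ) with hd
  set n : ℤ := round ((s - d - k) / Δ) with hn
  have hQ : rqimQuant M Δ k m s = Δ * (n:ℝ) + d + k := rfl
  set Q : ℝ := rqimQuant M Δ k m s with hQdef
  -- |s - Q| ≤ Δ/2
  have hround : |(s - d - k) / Δ - (n:ℝ)| ≤ 1/2 := abs_sub_round _
  have hsQ : |s - Q| ≤ Δ / 2 := by
    have h1 : s - Q = Δ * ((s - d - k) / Δ - (n:ℝ)) := by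
      rw [hQ]; field_simp; ring
    rw [h1, abs_mul, abs_of_pos hΔ]
    nlinarith [abs_nonneg ((s - d - k) / Δ - (n:ℝ))]
  -- 1 - α < 1/M
  have hαM : (1 - α) * (M:ℝ) < 1 := by
    have := (div_lt_iff₀ hMpos).mp hα0
    nlinarith
  constructor
  · exact ⟨n, by rw [hQ]; ring⟩
  · intro q hq hne
    -- obtain representation of q
    rw [rqimGrid, Set.mem_iUnion₂] at hq
    obtain ⟨j, hjmem, ℓ, hqeq⟩ := hq
    have hjM : j < M := Finset.mem_range.mp hjmem
    -- q - Q = t * (Δ/M), t nonzero integer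
    set t : ℤ := (j:ℤ) - (m:ℤ) + (ℓ - n) * (M:ℤ) with ht
    have hqQ : q - Q = (t:ℝ) * (Δ / (M:ℝ)) := by
      have htc : (t:ℝ) = (j:ℝ) - (m:ℝ) + ((ℓ:ℝ) - (n:ℝ)) * (M:ℝ) := by
        rw [ht]; push_cast; ring
      rw [hqeq, hQ, hd, htc]
      field_simp
      ring
    have htne : t ≠ 0 := by
      intro h0
      apply hne
      have : q - Q = 0 := by rw [hqQ, h0]; simp
      linarith
    have ht1 : (1:ℝ) ≤ |(t:ℝ)| := by
      have : (1:ℤ) ≤ |t| := Int.one_le_abs htne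
      exact_mod_cast this
    have hqQdist : Δ / (M:ℝ) ≤ |q - Q| := by
      rw [hqQ, abs_mul, abs_of_pos (div_pos hΔ hMpos)]
      nlinarith [div_pos hΔ hMpos]
    -- distances
    set sw : ℝ := α * Q + (1 - α) * s with hsw
    have hswQ : |sw - Q| = (1 - α) * |s - Q| := by
      have h1 : sw - Q = (1 - α) * (s - Q) := by rw [hsw]; ring
      rw [h1, abs_mul, abs_of_pos (by linarith : (0:ℝ) < 1 - α)]
    have he : |sw - Q| ≤ (1 - α) * Δ / 2 := by
      rw [hswQ]
      nlinarith
    have hkey : 2 * ((1 - α) * Δ / 2) < Δ / (M:ℝ) := by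
      rw [lt_div_iff₀ hMpos]
      nlinarith
    have htri : |q - Q| ≤ |sw - q| + |sw - Q| := by
      have := abs_sub_abs_le_abs_sub (q - Q) (q - sw)
      calc |q - Q| = |(q - sw) + (sw - Q)| := by ring_nf
        _ ≤ |q - sw| + |sw - Q| := abs_add_le _ _
        _ = |sw - q| + |sw - Q| := by rw [abs_sub_comm q sw]
    linarith
end

section
/- Fix an integer M ≥ 2, Δ > 0, a dither k ∈ ℝ and a scaling factor α with (M−1)/M < α < 1. For every s ∈ ℝ and every m ∈ {0,…,M−1}, let s_w = α·Q_m(s) + (1−α)·s and let z be the unique grid point of G nearest to s_w. Then z = Q_m(s) and (s_w − α·z)/(1−α) = s; that is, in the noiseless case the R-QIM restorer recovers the original cover value exactly, so R-QIM is reversible. -/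
/-- Reversibility of R-QIM in the noiseless case: if `z` is a grid point
nearest to the watermarked value `s_w = α·Q_m(s) + (1−α)·s`, then
`z = Q_m(s)` and the restorer output `(s_w − α·z)/(1−α)` equals the original
cover value `s`. -/
theorem rqim_noiseless_restoration (M : ℕ) (hM : 2 ≤ M) (Δ : ℝ) (hΔ : 0 < Δ)
    (k α : ℝ) (hα0 : ((M : ℝ) - 1) / (M : ℝ) < α) (hα1 : α < 1)
    (s : ℝ) (m : ℕ) (hm : m < M) (z : ℝ) (hz : z ∈ rqimGrid M Δ k)
    (hznear : ∀ q ∈ rqimGrid M Δ k,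
      |(α * rqimQuant M Δ k m s + (1 - α) * s) - z|
        ≤ |(α * rqimQuant M Δ k m s + (1 - α) * s) - q|) :
    z = rqimQuant M Δ k m s ∧
    ((α * rqimQuant M Δ k m s + (1 - α) * s) - α * z) / (1 - α) = s := by
  have hM0 : (0:ℝ) < (M:ℝ) := by exact_mod_cast Nat.lt_of_lt_of_le Nat.zero_lt_two hM
  have h1α : 0 < 1 - α := by linarith
  have hΔ' : Δ ≠ 0 := ne_of_gt hΔ
  have hinv : 1 - α < 1 / (M:ℝ) := by
    have hEq : ((M:ℝ)-1)/(M:ℝ) = 1 - 1/(M:ℝ) := by field_simp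
    rw [hEq] at hα0; linarith
  set x : ℝ := (s - (m : ℝ) * Δ / (M : ℝ) - k) / Δ with hx
  set r : ℤ := round x with hr
  have hQdef : rqimQuant M Δ k m s = Δ * (r:ℝ) + (m : ℝ) * Δ / (M : ℝ) + k := rfl
  set Q : ℝ := rqimQuant M Δ k m s with hQ
  have hQmem : Q ∈ rqimGrid M Δ k := by
    refine Set.mem_biUnion (Finset.mem_range.mpr hm) ⟨r, ?_⟩
    rw [hQdef]; ring
  have hs : s = Δ * x + (m : ℝ) * Δ / (M : ℝ) + k := by
    rw [hx]; field_simp; ring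
  have hsQ : |s - Q| ≤ Δ / 2 := by
    have h1 : s - Q = Δ * (x - (r:ℝ)) := by rw [hs, hQdef]; ring
    have h2 := abs_sub_round x
    rw [h1, abs_mul, abs_of_pos hΔ]
    calc Δ * |x - (r:ℝ)| ≤ Δ * (1/2) := by
          exact mul_le_mul_of_nonneg_left h2 (le_of_lt hΔ)
      _ = Δ / 2 := by ring
  have hswQ : |(α * Q + (1 - α) * s) - Q| < Δ / (2 * M) := by
    have h1 : (α * Q + (1 - α) * s) - Q = (1 - α) * (s - Q) := by ring
    rw [h1, abs_mul, abs_of_pos h1α]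
    calc (1 - α) * |s - Q| ≤ (1 - α) * (Δ / 2) :=
          mul_le_mul_of_nonneg_left hsQ (le_of_lt h1α)
      _ < (1 / (M:ℝ)) * (Δ / 2) := by
          exact mul_lt_mul_of_pos_right hinv (by positivity)
      _ = Δ / (2 * M) := by rw [one_div, div_eq_mul_inv, div_eq_mul_inv, mul_inv]; ring
  have hzQ : |z - Q| < Δ / M := by
    have hnear := hznear Q hQmem
    calc |z - Q| ≤ |(α * Q + (1 - α) * s) - z| + |(α * Q + (1 - α) * s) - Q| := by
          have := abs_sub (α * Q + (1 - α) * s - z) (α * Q + (1 - α) * s - Q)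
          have h2 : z - Q = (α * Q + (1 - α) * s - Q) - (α * Q + (1 - α) * s - z) := by ring
          rw [h2]
          calc |(α * Q + (1 - α) * s - Q) - (α * Q + (1 - α) * s - z)|
              ≤ |α * Q + (1 - α) * s - Q| + |α * Q + (1 - α) * s - z| := abs_sub _ _
            _ = |(α * Q + (1 - α) * s) - z| + |(α * Q + (1 - α) * s) - Q| := by ring
      _ ≤ |(α * Q + (1 - α) * s) - Q| + |(α * Q + (1 - α) * s) - Q| := by linarith [hnear]
      _ < Δ / (2 * M) + Δ / (2 * M) := by linarith [hswQ]
      _ = Δ / M := by field_simp; ring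
  obtain ⟨m', hm'mem, ℓ', hz'⟩ :
      ∃ m' ∈ Finset.range M, ∃ ℓ' : ℤ,
        z = (m' : ℝ) * Δ / (M : ℝ) + k + (ℓ' : ℝ) * Δ := by
    simpa [rqimGrid, rqimCodebook, Set.mem_iUnion] using hz
  set j : ℤ := ((m' : ℤ) - (m : ℤ)) + (ℓ' - r) * (M : ℤ) with hj
  have hzQeq : z - Q = (j : ℝ) * Δ / M := by
    rw [hz', hQdef, hj]
    push_cast
    field_simp
    ring
  have hj0 : j = 0 := by
    by_contra hne
    have h1 : (1:ℝ) ≤ |(j:ℝ)| := by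
      have : (1:ℤ) ≤ |j| := Int.one_le_abs hne
      exact_mod_cast this
    have h2 : |z - Q| = |(j:ℝ)| * (Δ / M) := by
      rw [hzQeq, abs_div, abs_mul, abs_of_pos hΔ, abs_of_pos hM0]
      ring
    have h3 : Δ / M ≤ |(j:ℝ)| * (Δ / M) := by
      nlinarith [div_pos hΔ hM0]
    linarith [hzQ, h2 ▸ h3]
  have hzeq : z = Q := by
    have : z - Q = 0 := by rw [hzQeq, hj0]; norm_num
    linarith
  refine ⟨hzeq, ?_⟩
  rw [hzeq, show α * Q + (1 - α) * s - α * Q = (1 - α) * s by ring,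
    mul_div_cancel_left₀ _ (ne_of_gt h1α)]
end

section
/- Fix an integer M ≥ 2, Δ > 0, a dither k ∈ ℝ and a scaling factor α with (M−1)/M < α < 1. Then the R-QIM embedding map (s, m) ↦ α·Q_m(s) + (1−α)·s from ℝ × {0,…,M−1} to ℝ is injective: if α·Q_m(s) + (1−α)·s = α·Q_{m'}(s') + (1−α)·s' then m = m' and s = s'. -/
/-- The quantization error is at most `Δ/2`. -/
lemma rqim_err (M : ℕ) (Δ k : ℝ) (hΔ : 0 < Δ) (m : ℕ) (s : ℝ) :
    |s - rqimQuant M Δ k m s| ≤ Δ / 2 := by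
  set x : ℝ := (s - (m : ℝ) * Δ / (M : ℝ) - k) / Δ with hx
  have h1 : |x - (round x : ℝ)| ≤ 1 / 2 := abs_sub_round x
  have h2 : s - rqimQuant M Δ k m s = Δ * (x - (round x : ℝ)) := by
    unfold rqimQuant
    rw [hx]
    field_simp
    ring
  rw [h2, abs_mul, abs_of_pos hΔ]
  calc Δ * |x - (round x : ℝ)| ≤ Δ * (1 / 2) := by
        exact mul_le_mul_of_nonneg_left h1 hΔ.le
    _ = Δ / 2 := by ring

/-- Injectivity of the R-QIM embedding map
`(s, m) ↦ α·Q_m(s) + (1−α)·s` on `ℝ × {0,…,M−1}`: equal watermarked values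
force equal messages and equal cover values. -/
theorem rqim_embedding_injective (M : ℕ) (hM : 2 ≤ M) (Δ : ℝ) (hΔ : 0 < Δ)
    (k α : ℝ) (hα0 : ((M : ℝ) - 1) / (M : ℝ) < α) (hα1 : α < 1)
    (s s' : ℝ) (m m' : ℕ) (hm : m < M) (hm' : m' < M)
    (h : α * rqimQuant M Δ k m s + (1 - α) * s
        = α * rqimQuant M Δ k m' s' + (1 - α) * s') :
    m = m' ∧ s = s' := by
  have hMR : (0 : ℝ) < (M : ℝ) := by
    have : (2 : ℝ) ≤ (M : ℝ) := by exact_mod_cast hM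
    linarith
  set r : ℤ := round ((s - (m : ℝ) * Δ / (M : ℝ) - k) / Δ) with hr
  set r' : ℤ := round ((s' - (m' : ℝ) * Δ / (M : ℝ) - k) / Δ) with hr'
  have hQ : rqimQuant M Δ k m s = Δ * (r : ℝ) + (m : ℝ) * Δ / (M : ℝ) + k := rfl
  have hQ' : rqimQuant M Δ k m' s' = Δ * (r' : ℝ) + (m' : ℝ) * Δ / (M : ℝ) + k := rfl
  have he : |s - rqimQuant M Δ k m s| ≤ Δ / 2 := rqim_err M Δ k hΔ m s
  have he' : |s' - rqimQuant M Δ k m' s'| ≤ Δ / 2 := rqim_err M Δ k hΔ m' s'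
  set n : ℤ := (M : ℤ) * (r - r') + (m : ℤ) - (m' : ℤ) with hn
  -- Q - Q' = n * Δ / M
  have hdiff : rqimQuant M Δ k m s - rqimQuant M Δ k m' s' = (n : ℝ) * Δ / (M : ℝ) := by
    rw [hQ, hQ', hn]
    push_cast
    field_simp
    ring
  -- From h: Q - Q' = (1-α)((s' - Q') - (s - Q))
  have hkey : rqimQuant M Δ k m s - rqimQuant M Δ k m' s'
      = (1 - α) * ((s' - rqimQuant M Δ k m' s') - (s - rqimQuant M Δ k m s)) := by
    nlinarith [h]
  have h1α : 0 < 1 - α := by linarith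
  have habs : |rqimQuant M Δ k m s - rqimQuant M Δ k m' s'| ≤ (1 - α) * Δ := by
    rw [hkey, abs_mul, abs_of_pos h1α]
    have : |(s' - rqimQuant M Δ k m' s') - (s - rqimQuant M Δ k m s)| ≤ Δ := by
      calc _ ≤ |s' - rqimQuant M Δ k m' s'| + |s - rqimQuant M Δ k m s| := abs_sub _ _
        _ ≤ Δ / 2 + Δ / 2 := add_le_add he' he
        _ = Δ := by ring
    nlinarith
  have hsmall : (1 - α) * Δ < Δ / (M : ℝ) := by
    have h1 : 1 - α < 1 / (M : ℝ) := by
      have : ((M : ℝ) - 1) / (M : ℝ) = 1 - 1 / (M : ℝ) := by field_simp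
      rw [this] at hα0
      linarith
    calc (1 - α) * Δ < (1 / (M : ℝ)) * Δ := by nlinarith
      _ = Δ / (M : ℝ) := by ring
  have hnabs : |(n : ℝ)| * (Δ / (M : ℝ)) < Δ / (M : ℝ) := by
    have : |(n : ℝ)| * (Δ / (M : ℝ)) = |rqimQuant M Δ k m s - rqimQuant M Δ k m' s'| := by
      rw [hdiff, abs_div, abs_mul, abs_of_pos hΔ, abs_of_pos hMR]
      ring
    rw [this]
    exact lt_of_le_of_lt habs hsmall
  have hn0 : n = 0 := by
    by_contra hne
    have h1 : (1 : ℝ) ≤ |(n : ℝ)| := by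
      rw [← Int.cast_abs]
      exact_mod_cast Int.one_le_abs hne
    have hpos : 0 < Δ / (M : ℝ) := div_pos hΔ hMR
    nlinarith
  have hmm : (m : ℤ) = (m' : ℤ) := by
    have hdvd : (M : ℤ) ∣ (m : ℤ) - (m' : ℤ) := ⟨r' - r, by linarith [hn0, hn]; ⟩
    have habs : |(m : ℤ) - (m' : ℤ)| < (M : ℤ) := by
      rw [abs_lt]
      constructor <;> omega
    have := Int.eq_zero_of_abs_lt_dvd hdvd habs
    omega
  have hmeq : m = m' := by exact_mod_cast hmm
  refine ⟨hmeq, ?_⟩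
  -- n = 0 and m = m' give Q = Q'
  have hQeq : rqimQuant M Δ k m s = rqimQuant M Δ k m' s' := by
    have : (n : ℝ) = 0 := by exact_mod_cast hn0
    have := hdiff
    rw [‹(n:ℝ) = 0›] at this
    simp at this
    linarith
  rw [hQeq] at h
  have : (1 - α) * s = (1 - α) * s' := by linarith
  exact mul_left_cancel₀ (by linarith : (1 - α) ≠ 0) this
end

section
/- Fix an integer M ≥ 2, Δ > 0, a dither k ∈ ℝ and a scaling factor α with (M−1)/M < α < 1, so that Δ/(2M) − (1−α)Δ/2 > 0. Let s ∈ ℝ, m ∈ {0,…,M−1}, s_w = α·Q_m(s) + (1−α)·s, and suppose the received value is y = s_w + n with |n| < Δ/(2M) − (1−α)Δ/2. Then Q_m(s) is still the strictly nearest grid point of G to y (so extraction of m remains correct), and the restored value ŝ = (y − α·Q_m(s))/(1−α) satisfies ŝ − s = n/(1−α) (Eqs. 12 and 14 of the paper). -/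
/-- Noisy-channel behaviour of R-QIM (Eqs. 12 and 14 of the paper): the
noise margin `Δ/(2M) − (1−α)Δ/2` is positive; if `y = s_w + n` with
`|n| < Δ/(2M) − (1−α)Δ/2`, then `Q_m(s)` is still the strictly nearest grid
point to `y` (so extraction of `m` remains correct), and the restored value
`ŝ = (y − α·Q_m(s))/(1−α)` satisfies `ŝ − s = n/(1−α)`. -/
theorem rqim_noisy_extraction_and_restoration (M : ℕ) (hM : 2 ≤ M) (Δ : ℝ)
    (hΔ : 0 < Δ) (k α : ℝ) (hα0 : ((M : ℝ) - 1) / (M : ℝ) < α) (hα1 : α < 1)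
    (s n : ℝ) (m : ℕ) (hm : m < M)
    (hn : |n| < Δ / (2 * (M : ℝ)) - (1 - α) * Δ / 2) :
    0 < Δ / (2 * (M : ℝ)) - (1 - α) * Δ / 2 ∧
    (∀ q ∈ rqimGrid M Δ k, q ≠ rqimQuant M Δ k m s →
      |((α * rqimQuant M Δ k m s + (1 - α) * s) + n) - rqimQuant M Δ k m s|
        < |((α * rqimQuant M Δ k m s + (1 - α) * s) + n) - q|) ∧
    (((α * rqimQuant M Δ k m s + (1 - α) * s) + n)
        - α * rqimQuant M Δ k m s) / (1 - α) - s = n / (1 - α) := by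
  have hM0 : (0:ℝ) < (M:ℝ) := by positivity
  have hpos : 0 < Δ / (2 * (M : ℝ)) - (1 - α) * Δ / 2 :=
    lt_of_le_of_lt (abs_nonneg n) hn
  set Q := rqimQuant M Δ k m s with hQdef
  set y := (α * Q + (1 - α) * s) + n with hydef
  have hα1' : (0:ℝ) < 1 - α := by linarith
  -- quantization error bound
  have hsQ : |s - Q| ≤ Δ / 2 := by
    have h := abs_sub_round ((s - (m:ℝ) * Δ / (M:ℝ) - k) / Δ)
    have : s - Q = Δ * ((s - (m:ℝ) * Δ / (M:ℝ) - k) / Δ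
        - (round ((s - (m:ℝ) * Δ / (M:ℝ) - k) / Δ) : ℝ)) := by
      rw [hQdef]; unfold rqimQuant; field_simp; ring
    rw [this, abs_mul, abs_of_pos hΔ]
    calc Δ * |_| ≤ Δ * (1/2) := by
          exact mul_le_mul_of_nonneg_left h hΔ.le
      _ = Δ / 2 := by ring
  have hyQ : |y - Q| < Δ / (2 * (M:ℝ)) := by
    have : y - Q = (1 - α) * (s - Q) + n := by rw [hydef]; ring
    rw [this]
    calc |(1 - α) * (s - Q) + n| ≤ |(1 - α) * (s - Q)| + |n| := abs_add_le _ _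
      _ = (1 - α) * |s - Q| + |n| := by rw [abs_mul, abs_of_pos hα1']
      _ < (1 - α) * (Δ/2) + (Δ / (2 * (M:ℝ)) - (1 - α) * Δ / 2) := by
          have := mul_le_mul_of_nonneg_left hsQ hα1'.le
          linarith
      _ = Δ / (2 * (M:ℝ)) := by ring
  refine ⟨hpos, ?_, ?_⟩
  · intro q hq hqQ
    obtain ⟨m', hm', ℓ', hq'⟩ : ∃ m' < M, ∃ ℓ' : ℤ,
        q = (m' : ℝ) * Δ / (M : ℝ) + k + (ℓ' : ℝ) * Δ := by
      simpa [rqimGrid, rqimCodebook, Set.mem_iUnion] using hq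
    set r : ℤ := round ((s - (m:ℝ) * Δ / (M:ℝ) - k) / Δ) with hr
    have hQ' : Q = (m : ℝ) * Δ / (M : ℝ) + k + (r : ℝ) * Δ := by
      rw [hQdef]; unfold rqimQuant; rw [← hr]; ring
    set j : ℤ := ((m' : ℤ) - (m : ℤ)) + (M : ℤ) * (ℓ' - r) with hj
    have hqQj : q - Q = (j : ℝ) * (Δ / (M:ℝ)) := by
      rw [hq', hQ', hj]
      push_cast
      field_simp
      ring
    have hj0 : j ≠ 0 := by
      intro h
      apply hqQ
      have : q - Q = 0 := by rw [hqQj, h]; simp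
      linarith
    have hdist : Δ / (M:ℝ) ≤ |q - Q| := by
      rw [hqQj, abs_mul, abs_of_pos (by positivity : (0:ℝ) < Δ / (M:ℝ))]
      have : (1:ℝ) ≤ |(j:ℝ)| := by
        rw [← Int.cast_abs]
        exact_mod_cast Int.one_le_abs hj0
      nlinarith [div_pos hΔ hM0]
    have h2 : Δ / (2 * (M:ℝ)) ≤ |y - q| := by
      have htri : |q - Q| ≤ |q - y| + |y - Q| := by
        calc |q - Q| = |(q - y) + (y - Q)| := by ring_nf
          _ ≤ |q - y| + |y - Q| := abs_add_le _ _
      have : |q - y| = |y - q| := abs_sub_comm _ _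
      have hhalf : Δ / (M:ℝ) = Δ / (2 * (M:ℝ)) + Δ / (2 * (M:ℝ)) := by
        field_simp; ring
      linarith
    linarith
  · field_simp
    rw [hydef]; ring
end
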